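/- arXiv:2405.13472 — 5 statements merged into one kernel-verified Lean document; each statement's English description precedes it below -/
import Mathlib

section
/- Let Λ be an even lattice of the form M ⊕ ℤk ⊕ ℤℓ, where M is unimodular containing a hyperbolic plane and k² = ℓ² = −2. Write a primitive vector β ∈ Λ as β = a·m + b·k + c·ℓ with m ∈ M primitive, m² = 2t, gcd(a,b,c) = 1. Then the divisibility of β (the positive generator of the ideal β·Λ ⊂ ℤ) equals gcd(a, 2). -/
/-!
A primitive vector `m` of a unimodular lattice has divisibility one: if all values of `B m`
are divisible by `g`, then `B m = g • ψ`, unimodularity writes `ψ = B m'`, so `m = g • m'`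
and `g` is a unit. Hence `β · Λ` is the ideal `(a, 2b, 2c) = (gcd(a, 2 gcd(b, c)))`, which is
`(gcd(a, 2))` because `a` is coprime to `gcd(b, c)`.
-/

theorem Int.gcd_mul_gcd_right_cancel {a b c : ℤ} (habc : Int.gcd a (Int.gcd b c) = 1)
    (n : ℤ) : Int.gcd a (n * Int.gcd b c) = Int.gcd a n := by
  have hcop : Nat.Coprime (Int.gcd b c) a.natAbs := Nat.Coprime.symm habc
  simpa [Int.gcd, Int.natAbs_mul] using Nat.Coprime.gcd_mul_right_cancel_right n.natAbs hcop

theorem Int.exists_sub_mul_sub_mul_eq_iff_gcd_dvd {a b c : ℤ} (habc : Int.gcd a (Int.gcd b c) = 1)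
    (n s : ℤ) :
    (∃ x y z : ℤ, a * x - n * b * y - n * c * z = s) ↔ (Int.gcd a n : ℤ) ∣ s := by
  constructor
  · rintro ⟨x, y, z, rfl⟩
    have ha : (Int.gcd a n : ℤ) ∣ a := Int.gcd_dvd_left a n
    have hn : (Int.gcd a n : ℤ) ∣ n := Int.gcd_dvd_right a n
    rw [mul_assoc n b, mul_assoc n c]
    exact ((ha.mul_right x).sub (hn.mul_right _)).sub (hn.mul_right _)
  · rintro ⟨w, rfl⟩
    have hbez : (Int.gcd a n : ℤ) = a * Int.gcdA a (n * Int.gcd b c)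
        + n * Int.gcd b c * Int.gcdB a (n * Int.gcd b c) := by
      rw [← Int.gcd_mul_gcd_right_cancel habc n]
      exact Int.gcd_eq_gcd_ab a _
    have hbc : (Int.gcd b c : ℤ) = b * Int.gcdA b c + c * Int.gcdB b c := Int.gcd_eq_gcd_ab b c
    refine ⟨Int.gcdA a (n * Int.gcd b c) * w, -(Int.gcdA b c * Int.gcdB a (n * Int.gcd b c) * w),
      -(Int.gcdB b c * Int.gcdB a (n * Int.gcd b c) * w), ?_⟩
    rw [hbez, hbc]
    ring

theorem LinearMap.exists_eq_smul_of_forall_dvd {M : Type*} [AddCommGroup M] [Module ℤ M]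
    (f : M →ₗ[ℤ] ℤ) {g : ℤ} (hg : ∀ x, g ∣ f x) :
    ∃ ψ : M →ₗ[ℤ] ℤ, f = g • ψ := by
  refine ⟨{ toFun := fun x => f x / g
            map_add' := fun x y => by rw [map_add, Int.add_ediv_of_dvd_right (hg y)]
            map_smul' := fun r x => by
              rw [f.map_smul, smul_eq_mul, Int.mul_ediv_assoc r (hg x)]; rfl }, ?_⟩
  ext x
  exact (Int.mul_ediv_cancel' (hg x)).symm

def IsPrimitiveVector {M : Type*} [AddCommGroup M] (m : M) : Prop :=
  ∀ (c : ℤ) (m' : M), m = c • m' → IsUnit c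

theorem LinearMap.surjective_apply_of_bijective_of_isPrimitiveVector {M : Type*} [AddCommGroup M]
    [Module ℤ M] {B : M →ₗ[ℤ] M →ₗ[ℤ] ℤ} (hB : Function.Bijective B) {m : M}
    (hm : IsPrimitiveVector m) : Function.Surjective (B m) := by
  obtain ⟨g, hg⟩ := (IsPrincipalIdealRing.principal (LinearMap.range (B m))).principal
  have hdvd : ∀ x, g ∣ B m x := fun x => by
    have hx : B m x ∈ LinearMap.range (B m) := ⟨x, rfl⟩
    rwa [hg, Ideal.submodule_span_eq, Ideal.mem_span_singleton] at hx
  obtain ⟨ψ, hψ⟩ := (B m).exists_eq_smul_of_forall_dvd hdvd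
  obtain ⟨m', rfl⟩ := hB.2 ψ
  have hunit : IsUnit g := hm g m' (hB.1 (by rw [hψ, map_zsmul]))
  have hrange : LinearMap.range (B m) = ⊤ := by
    rw [hg, Ideal.submodule_span_eq, Ideal.span_singleton_eq_top.mpr hunit]
  exact LinearMap.range_eq_top.mp hrange

theorem divisibility_eq_gcd_a_two_general
    {M : Type*} [AddCommGroup M] [Module ℤ M]
    (B : M →ₗ[ℤ] M →ₗ[ℤ] ℤ)
    (hunimodular : Function.Bijective B)
    (m : M) (hm : ∀ (c : ℤ) (m' : M), m = c • m' → IsUnit c)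
    (a b c : ℤ) (habc : Int.gcd a (Int.gcd b c) = 1)
    (form : (M × ℤ × ℤ) → (M × ℤ × ℤ) → ℤ)
    (hform : ∀ x y : M × ℤ × ℤ,
      form x y = B x.1 y.1 - 2 * x.2.1 * y.2.1 - 2 * x.2.2 * y.2.2) :
    ∀ s : ℤ, (∃ x : M × ℤ × ℤ, form (a • m, b, c) x = s) ↔ ((Int.gcd a 2 : ℤ) ∣ s) := by
  intro s
  have hsurj := LinearMap.surjective_apply_of_bijective_of_isPrimitiveVector hunimodular hm
  rw [← Int.exists_sub_mul_sub_mul_eq_iff_gcd_dvd habc]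
  constructor
  · rintro ⟨⟨x, y, z⟩, rfl⟩
    exact ⟨B m x, y, z, by simp [hform]⟩
  · rintro ⟨x, y, z, rfl⟩
    obtain ⟨x', rfl⟩ := hsurj x
    exact ⟨(x', y, z), by simp [hform]⟩

/-- Let `Λ = M ⊕ ℤk ⊕ ℤℓ` be an even lattice, where `M` is unimodular and contains a
hyperbolic plane, and `k² = ℓ² = −2`.  For a primitive vector `β = a·m + b·k + c·ℓ`
(with `m ∈ M` primitive, `m² = 2t`, `gcd(a,b,c) = 1`), the set of values `β·Λ` is the
ideal generated by `gcd(a,2)`, i.e. the divisibility of `β` equals `gcd(a, 2)`. -/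
theorem divisibility_eq_gcd_a_two
    {M : Type*} [AddCommGroup M] [Module ℤ M]
    (B : M →ₗ[ℤ] M →ₗ[ℤ] ℤ)
    (hsymm : ∀ x y : M, B x y = B y x)
    (heven : ∀ x : M, 2 ∣ B x x)
    (hunimodular : Function.Bijective B)
    (hhyperbolic : ∃ u v : M, B u u = 0 ∧ B v v = 0 ∧ B u v = 1)
    (m : M) (hm : ∀ (c : ℤ) (m' : M), m = c • m' → IsUnit c)
    (t : ℤ) (hmt : B m m = 2 * t)
    (a b c : ℤ) (habc : Int.gcd a (Int.gcd b c) = 1)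
    (form : (M × ℤ × ℤ) → (M × ℤ × ℤ) → ℤ)
    (hform : ∀ x y : M × ℤ × ℤ,
      form x y = B x.1 y.1 - 2 * x.2.1 * y.2.1 - 2 * x.2.2 * y.2.2) :
    ∀ s : ℤ, (∃ x : M × ℤ × ℤ, form (a • m, b, c) x = s) ↔ ((Int.gcd a 2 : ℤ) ∣ s) :=
  divisibility_eq_gcd_a_two_general B hunimodular m hm a b c habc form hform
end

section
/- Let T = N ⊕ B, where N is an even lattice and B is the rank-3 lattice with Gram matrix [[2,0,1],[0,−4,−2],[1,−2,−2]]. Then T contains no vector w, orthogonal to N, with w² = 0 and divisibility 1 in T. -/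
open Matrix

lemma zmod2_aux : ∀ u v : ZMod 2, u*u + u*v + v*v = 0 → u = 0 ∧ v = 0 := by decide

/-- Let `T = N ⊕ B`, with `N` an even (nondegenerate) lattice and `B` the rank-3 lattice
with Gram matrix `[[2,0,1],[0,−4,−2],[1,−2,−2]]`.  Then `T` contains no vector `w`
orthogonal to `N` with `w² = 0` and divisibility 1 in `T` (i.e. such that the only common
divisors of the values `w·x`, `x ∈ T`, are units). -/
theorem no_isotropic_divisibility_one_vector
    {N : Type*} [AddCommGroup N] [Module ℤ N]
    (BN : N →ₗ[ℤ] N →ₗ[ℤ] ℤ)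
    (hsymm : ∀ x y : N, BN x y = BN y x)
    (heven : ∀ x : N, 2 ∣ BN x x)
    (hnondeg : ∀ x : N, (∀ y : N, BN x y = 0) → x = 0)
    (G : Matrix (Fin 3) (Fin 3) ℤ)
    (hG : G = !![2, 0, 1; 0, -4, -2; 1, -2, -2])
    (form : (N × (Fin 3 → ℤ)) → (N × (Fin 3 → ℤ)) → ℤ)
    (hform : ∀ x y : N × (Fin 3 → ℤ),
      form x y = BN x.1 y.1 + x.2 ⬝ᵥ G.mulVec y.2)
    (w : N × (Fin 3 → ℤ))
    (horth : ∀ n : N, form w (n, 0) = 0)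
    (hsq : form w w = 0)
    (hdiv : ∀ d : ℤ, (∀ x : N × (Fin 3 → ℤ), d ∣ form w x) → IsUnit d) :
    False := by
  -- w.1 = 0
  have hw1 : w.1 = 0 := by
    apply hnondeg
    intro n
    have h := horth n
    rw [hform] at h
    simpa using h
  set x := w.2 0 with hx
  set y := w.2 1 with hy
  set z := w.2 2 with hz
  have hBzero : BN w.1 w.1 = 0 := by simp [hw1]
  have hqq : x*x - 2*y*y - z*z + x*z - 2*y*z = 0 := by
    have h := hsq
    rw [hform, hBzero, hG] at h
    simp [Matrix.mulVec, dotProduct, Fin.sum_univ_three, Matrix.vecHead, Matrix.vecTail] at h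
    linarith [h]
  -- mod 2: x*x + x*z + z*z ≡ 0
  have hcast : ((x : ZMod 2))*(x:ZMod 2) + (x:ZMod 2)*(z:ZMod 2) + (z:ZMod 2)*(z:ZMod 2) = 0 := by
    have : ((x*x + x*z + z*z : ℤ) : ZMod 2) = ((2*(y*y + y*z + z*z) : ℤ) : ZMod 2) := by
      congr 1; linarith
    push_cast at this
    rw [this]
    ring_nf
    simp [show (2 : ZMod 2) = 0 from rfl]
  obtain ⟨hx0, hz0⟩ := zmod2_aux _ _ hcast
  have hx2 : (2:ℤ) ∣ x := by
    have := (ZMod.intCast_zmod_eq_zero_iff_dvd x 2).mp hx0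
    exact_mod_cast this
  have hz2 : (2:ℤ) ∣ z := by
    have := (ZMod.intCast_zmod_eq_zero_iff_dvd z 2).mp hz0
    exact_mod_cast this
  have h2 : IsUnit (2:ℤ) := by
    apply hdiv
    intro v
    rw [hform, hw1]
    simp only [map_zero, LinearMap.zero_apply, zero_add]
    rw [hG]
    simp [Matrix.mulVec, dotProduct, Fin.sum_univ_three, Matrix.vecHead, Matrix.vecTail]
    obtain ⟨a, ha⟩ := hx2
    obtain ⟨c, hc⟩ := hz2
    rw [← hx, ← hz] at *
    rw [ha, hc]
    ring_nf
    omega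
  exact (Int.isUnit_iff.mp h2).elim (by norm_num) (by norm_num)
end

section
/- Let Q₀ ⊂ ℙ⁸ be the rank-4 quadric defined by x₁₁x₂₂ − x₁₂x₂₁ = 0 in the projectivization of 3×3 matrices (x_{ij}). Every 3-dimensional linear subspace ℙ³ contained in Q₀ meets the Segre variety of rank-1 matrices. -/
/-!
The upper-left `2 × 2` blocks of the matrices in `W` form a linear space of singular `2 × 2`
matrices, i.e. a linear space on the smooth quadric `det = 0` of `ℙ³`; such a space lies in one
ruling, so all blocks share a kernel vector `v` or (after transposing) a left kernel vector.
Then `M ↦ M (v, 0)` takes values in the line of the last basis vector, so a 3-dimensional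
subspace `V ⊆ W` kills `x = (v, 0)`. Completing `x` to a basis `x, y, z`, the pencil of maps
`M ↦ M (s y + t z)` from `V` to `ℂ³` has a singular member (an eigenvalue of
`(M ↦ M z)⁻¹ ∘ (M ↦ M y)`), which yields `M ≠ 0` in `V` killing both `x` and `s y + t z`,
hence of rank at most one.
-/

open Module Matrix

section LinearAlgebra

variable {K V : Type*} [Field K] [AddCommGroup V] [Module K V]

theorem exists_linearIndependent_triple [FiniteDimensional K V] (h : 2 < finrank K V) {x : V}
    (hx : x ≠ 0) : ∃ y z, LinearIndependent K ![x, y, z] := by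
  obtain ⟨y, hy⟩ := exists_linearIndependent_pair_of_one_lt_finrank (R := K) (by omega) hx
  obtain ⟨z, hz⟩ := exists_linearIndependent_snoc_of_lt_finrank hy h
  have hsnoc : (Fin.snoc ![x, y] z : Fin 3 → V) = ![x, y, z] := by
    ext i
    fin_cases i <;> rfl
  exact ⟨y, z, hsnoc ▸ hz⟩

theorem LinearIndependent.pair_smul_add_smul {x y z : V} (h : LinearIndependent K ![x, y, z])
    {a b : K} (hab : a ≠ 0 ∨ b ≠ 0) : LinearIndependent K ![x, a • y + b • z] := by
  rw [LinearIndependent.pair_iff]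
  intro s t hst
  have hcoef := Fintype.linearIndependent_iff.mp h ![s, t * a, t * b] (by
    rw [Fin.sum_univ_three]
    simp only [Matrix.cons_val, mul_smul]
    rw [← hst]
    module)
  refine ⟨hcoef 0, ?_⟩
  have ha : t * a = 0 := hcoef 1
  have hb : t * b = 0 := hcoef 2
  rcases hab with hab | hab
  · exact (mul_eq_zero.mp ha).resolve_right hab
  · exact (mul_eq_zero.mp hb).resolve_right hab

theorem Submodule.finrank_le_finrank_inf_ker_add_one [FiniteDimensional K V] (W : Submodule K V)
    (φ : Module.Dual K V) : finrank K W ≤ finrank K ↥(W ⊓ LinearMap.ker φ) + 1 := by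
  have h₁ := Submodule.finrank_sup_add_finrank_inf_eq W (LinearMap.ker φ)
  have h₂ := Submodule.finrank_le (W ⊔ LinearMap.ker φ)
  have h₃ := LinearMap.finrank_range_add_finrank_ker φ
  have h₄ := Submodule.finrank_le (LinearMap.range φ)
  rw [finrank_self] at h₄
  omega

theorem LinearMap.exists_ne_zero_smul_add_smul_eq_zero [IsAlgClosed K] [FiniteDimensional K V]
    [Nontrivial V] {E : Type*} [AddCommGroup E] [Module K E] [FiniteDimensional K E]
    (hE : finrank K E ≤ finrank K V) (f g : V →ₗ[K] E) :
    ∃ v ≠ 0, ∃ a b : K, (a ≠ 0 ∨ b ≠ 0) ∧ a • f v + b • g v = 0 := by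
  by_cases hg : Function.Injective g
  swap
  · obtain ⟨v, hv, hgv⟩ : ∃ v ≠ 0, g v = 0 := by
      simpa [injective_iff_map_eq_zero, and_comm] using hg
    exact ⟨v, hv, 0, 1, .inr one_ne_zero, by simp [hgv]⟩
  have hrank : finrank K V = finrank K E := le_antisymm (finrank_le_finrank_of_injective hg) hE
  let e : V ≃ₗ[K] E :=
    .ofBijective g ⟨hg, (injective_iff_surjective_of_finrank_eq_finrank hrank).mp hg⟩
  -- an eigenvector of `g⁻¹ ∘ f` is a degenerate member of the pencil
  obtain ⟨μ, hμ⟩ := Module.End.exists_eigenvalue (e.symm.toLinearMap ∘ₗ f)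
  obtain ⟨v, hv⟩ := hμ.exists_hasEigenvector
  refine ⟨v, hv.2, 1, -μ, .inl one_ne_zero, ?_⟩
  have := congrArg e (hv.apply_eq_smul)
  simp only [coe_comp, LinearEquiv.coe_coe, Function.comp_apply, LinearEquiv.apply_symm_apply,
    map_smul] at this
  rw [one_smul, this, neg_smul, add_neg_eq_zero]
  rfl

end LinearAlgebra

theorem Matrix.rank_add_card_le_of_mulVec_eq_zero {K m n ι : Type*} [Field K] [Fintype n]
    [Fintype ι] {M : Matrix m n K} {v : ι → n → K} (hv : LinearIndependent K v)
    (hMv : ∀ i, M *ᵥ v i = 0) : M.rank + Fintype.card ι ≤ Fintype.card n := by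
  have hker : Submodule.span K (Set.range v) ≤ LinearMap.ker M.mulVecLin :=
    Submodule.span_le.mpr (Set.range_subset_iff.mpr hMv)
  have := Submodule.finrank_mono hker
  rw [finrank_span_eq_card hv] at this
  have := LinearMap.finrank_range_add_finrank_ker M.mulVecLin
  rw [finrank_fintype_fun_eq_card] at this
  unfold Matrix.rank
  omega

theorem Matrix.exists_ne_zero_rank_add_two_le_of_forall_mulVec_eq_zero {K m n : Type*} [Field K]
    [IsAlgClosed K] [Fintype m] [Nonempty m] [Fintype n] (V : Submodule K (Matrix m n K))
    (hV : Fintype.card m ≤ finrank K V) (hn : 3 ≤ Fintype.card n) {x : n → K} (hx : x ≠ 0)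
    (hVx : ∀ M ∈ V, M *ᵥ x = 0) : ∃ M ∈ V, M ≠ 0 ∧ M.rank + 2 ≤ Fintype.card n := by
  obtain ⟨y, z, hxyz⟩ := exists_linearIndependent_triple (K := K)
    (by rwa [finrank_fintype_fun_eq_card]) hx
  have : Nontrivial V := Module.nontrivial_of_finrank_pos (Fintype.card_pos.trans_le hV)
  let ev (u : n → K) : V →ₗ[K] m → K := ((mulVecBilin K K).flip u).domRestrict V
  obtain ⟨⟨M, hMV⟩, hM0, a, b, hab, hM⟩ :=
    LinearMap.exists_ne_zero_smul_add_smul_eq_zero (by simpa using hV) (ev y) (ev z)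
  refine ⟨M, hMV, by simpa using hM0, ?_⟩
  have hMyz : M *ᵥ (a • y + b • z) = 0 := by simpa [ev, mulVec_add, mulVec_smul] using hM
  simpa using M.rank_add_card_le_of_mulVec_eq_zero (hxyz.pair_smul_add_smul hab)
    (Fin.forall_fin_two.mpr ⟨hVx M hMV, hMyz⟩)

namespace Matrix

-- `det ((w, w')ᵀ A (v, v')) = det (w, w') * det A * det (v, v')`
theorem dotProduct_mulVec_mul_dotProduct_mulVec_of_det_eq_zero {R : Type*} [CommRing R]
    {A : Matrix (Fin 2) (Fin 2) R} (hA : A.det = 0) (v v' w w' : Fin 2 → R) :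
    (w ⬝ᵥ A *ᵥ v) * (w' ⬝ᵥ A *ᵥ v') = (w ⬝ᵥ A *ᵥ v') * (w' ⬝ᵥ A *ᵥ v) := by
  rw [det_fin_two] at hA
  simp only [dotProduct, mulVec, Fin.sum_univ_two]
  linear_combination (w 0 * w' 1 - w 1 * w' 0) * (v 0 * v' 1 - v 1 * v' 0) * hA

variable {K : Type*} [Field K]

theorem vecMul_eq_zero_or_mulVec_eq_zero_of_det_eq_zero {A : Matrix (Fin 2) (Fin 2) K}
    (hA : A.det = 0) {v w : Fin 2 → K} (h : w ⬝ᵥ A *ᵥ v = 0) :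
    w ᵥ* A = 0 ∨ A *ᵥ v = 0 := by
  by_contra! ⟨hw, hv⟩
  obtain ⟨j, hj⟩ := Function.ne_iff.mp hw
  obtain ⟨i, hi⟩ := Function.ne_iff.mp hv
  have := dotProduct_mulVec_mul_dotProduct_mulVec_of_det_eq_zero hA v (Pi.single j 1) w
    (Pi.single i 1)
  rw [h, zero_mul, dotProduct_mulVec, dotProduct_single_one, single_one_dotProduct] at this
  exact mul_ne_zero hj hi this.symm

theorem dotProduct_mulVec_eq_zero_of_det_add_eq_zero {A B : Matrix (Fin 2) (Fin 2) K}
    (hA0 : A ≠ 0) {v w : Fin 2 → K} (hv : A *ᵥ v = 0) (hw : w ᵥ* A = 0) (hB : B.det = 0)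
    (hAB : (A + B).det = 0) : w ⬝ᵥ B *ᵥ v = 0 := by
  obtain ⟨i, j, hij⟩ : ∃ i j, A i j ≠ 0 := by
    by_contra! h
    exact hA0 (ext h)
  have hsum := dotProduct_mulVec_mul_dotProduct_mulVec_of_det_eq_zero hAB v (Pi.single j 1) w
    (Pi.single i 1)
  have hB := dotProduct_mulVec_mul_dotProduct_mulVec_of_det_eq_zero hB v (Pi.single j 1) w
    (Pi.single i 1)
  simp only [add_mulVec, hv, zero_add, dotProduct_add, dotProduct_mulVec w A, hw,
    zero_dotProduct] at hsum
  simp only [mulVec_single_one, single_one_dotProduct, col_apply] at hsum hB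
  have : w ⬝ᵥ B *ᵥ v * A i j = 0 := by linear_combination hsum - hB
  exact (mul_eq_zero.mp this).resolve_right hij

theorem exists_mulVec_eq_zero_or_exists_vecMul_eq_zero_of_forall_det_eq_zero
    (S : Submodule K (Matrix (Fin 2) (Fin 2) K)) (hS : ∀ A ∈ S, A.det = 0) :
    (∃ v ≠ 0, ∀ A ∈ S, A *ᵥ v = 0) ∨ (∃ w ≠ 0, ∀ A ∈ S, w ᵥ* A = 0) := by
  by_cases hS0 : ∀ A ∈ S, A = 0
  · exact .inl ⟨Pi.single 0 1, by simp, fun A hA => by rw [hS0 A hA, zero_mulVec]⟩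
  push Not at hS0
  obtain ⟨A, hA, hA0⟩ := hS0
  obtain ⟨v, hv0, hv⟩ := exists_mulVec_eq_zero_iff.mpr (hS A hA)
  obtain ⟨w, hw0, hw⟩ := exists_vecMul_eq_zero_iff.mpr (hS A hA)
  have hwv : ∀ B ∈ S, w ᵥ* B = 0 ∨ B *ᵥ v = 0 := fun B hB =>
    vecMul_eq_zero_or_mulVec_eq_zero_of_det_eq_zero (hS B hB)
      (dotProduct_mulVec_eq_zero_of_det_add_eq_zero hA0 hv hw (hS B hB) (hS _ (S.add_mem hA hB)))
  by_contra! h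
  obtain ⟨B, hB, hBv⟩ := h.1 v hv0
  obtain ⟨C, hC, hwC⟩ := h.2 w hw0
  have hwB := (hwv B hB).resolve_right hBv
  have hCv := (hwv C hC).resolve_left hwC
  rcases hwv _ (S.add_mem hB hC) with hBC | hBC
  · exact hwC (by rwa [vecMul_add, hwB, zero_add] at hBC)
  · exact hBv (by rwa [add_mulVec, hCv, add_zero] at hBC)

@[simps]
def upperLeftₗ (R : Type*) [Semiring R] (n : ℕ) :
    Matrix (Fin (n + 1)) (Fin (n + 1)) R →ₗ[R] Matrix (Fin n) (Fin n) R where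
  toFun M := M.submatrix Fin.castSucc Fin.castSucc
  map_add' _ _ := rfl
  map_smul' _ _ := rfl

theorem upperLeftₗ_transpose {R : Type*} [Semiring R] {n : ℕ}
    (M : Matrix (Fin (n + 1)) (Fin (n + 1)) R) : upperLeftₗ R n Mᵀ = (upperLeftₗ R n M)ᵀ :=
  rfl

variable [IsAlgClosed K] {n : ℕ}

theorem exists_ne_zero_rank_add_two_le_of_forall_upperLeft_mulVec_eq_zero (hn : 2 ≤ n)
    (W : Submodule K (Matrix (Fin (n + 1)) (Fin (n + 1)) K)) (hW : n + 2 ≤ finrank K W)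
    {v : Fin n → K} (hv : v ≠ 0) (hWv : ∀ M ∈ W, upperLeftₗ K n M *ᵥ v = 0) :
    ∃ M ∈ W, M ≠ 0 ∧ M.rank + 2 ≤ n + 1 := by
  let x : Fin (n + 1) → K := Fin.snoc v 0
  have hx : x ≠ 0 := fun h => hv (funext fun i => by simpa [x] using congrFun h i.castSucc)
  -- `M *ᵥ x` vanishes off the last coordinate, so one more linear condition makes it vanish
  let φ : Module.Dual K (Matrix (Fin (n + 1)) (Fin (n + 1)) K) :=
    LinearMap.proj (Fin.last n) ∘ₗ (mulVecBilin K K).flip x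
  have hVx : ∀ M ∈ W ⊓ LinearMap.ker φ, M *ᵥ x = 0 := by
    rintro M ⟨hMW, hMφ⟩
    ext i
    induction i using Fin.lastCases with
    | last => exact hMφ
    | cast i =>
      simpa [mulVec, dotProduct, Fin.sum_univ_castSucc, x] using congrFun (hWv M hMW) i
  obtain ⟨M, hM, hM0, hMr⟩ := exists_ne_zero_rank_add_two_le_of_forall_mulVec_eq_zero
    (W ⊓ LinearMap.ker φ)
    (by have := W.finrank_le_finrank_inf_ker_add_one φ; simp; omega) (by simpa) hx hVx
  exact ⟨M, hM.1, hM0, by simpa using hMr⟩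

theorem exists_ne_zero_rank_add_two_le_of_forall_vecMul_upperLeft_eq_zero (hn : 2 ≤ n)
    (W : Submodule K (Matrix (Fin (n + 1)) (Fin (n + 1)) K)) (hW : n + 2 ≤ finrank K W)
    {w : Fin n → K} (hw : w ≠ 0) (hWw : ∀ M ∈ W, w ᵥ* upperLeftₗ K n M = 0) :
    ∃ M ∈ W, M ≠ 0 ∧ M.rank + 2 ≤ n + 1 := by
  have hWtw : ∀ M ∈ W.map (transposeLinearEquiv _ _ K K).toLinearMap,
      upperLeftₗ K n M *ᵥ w = 0 := by
    rintro _ ⟨M, hM, rfl⟩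
    change upperLeftₗ K n Mᵀ *ᵥ w = 0
    rw [upperLeftₗ_transpose, mulVec_transpose]
    exact hWw M hM
  obtain ⟨_, ⟨M, hM, rfl⟩, hM0, hMr⟩ :=
    exists_ne_zero_rank_add_two_le_of_forall_upperLeft_mulVec_eq_zero hn _
      (by rwa [LinearEquiv.finrank_map_eq]) hw hWtw
  exact ⟨M, hM, by simpa using hM0, by simpa using hMr⟩

end Matrix

/-- Let `Q₀ ⊂ ℙ⁸ = ℙ(Hom(ℂ³,ℂ³))` be the rank-4 quadric `x₁₁x₂₂ − x₁₂x₂₁ = 0`.  Every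
3-dimensional linear subspace `ℙ³` contained in `Q₀` (i.e. every 4-dimensional linear
subspace of the affine cone) meets the Segre variety of rank-1 matrices. -/
theorem P3_in_rank_four_quadric_meets_segre
    (W : Submodule ℂ (Matrix (Fin 3) (Fin 3) ℂ))
    (hW : Module.finrank ℂ W = 4)
    (hQ : ∀ M ∈ W, M 0 0 * M 1 1 - M 0 1 * M 1 0 = 0) :
    ∃ M ∈ W, M ≠ 0 ∧ M.rank ≤ 1 := by
  have hdet : ∀ A ∈ W.map (upperLeftₗ ℂ 2), A.det = 0 := by
    rintro _ ⟨M, hM, rfl⟩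
    simpa [det_fin_two] using hQ M hM
  obtain ⟨M, hM, hM0, hMr⟩ : ∃ M ∈ W, M ≠ 0 ∧ M.rank + 2 ≤ 2 + 1 := by
    rcases exists_mulVec_eq_zero_or_exists_vecMul_eq_zero_of_forall_det_eq_zero _ hdet with
      ⟨v, hv, hWv⟩ | ⟨w, hw, hWw⟩
    · exact exists_ne_zero_rank_add_two_le_of_forall_upperLeft_mulVec_eq_zero le_rfl W hW.ge hv
        fun M hM => hWv _ (Submodule.mem_map_of_mem hM)
    · exact exists_ne_zero_rank_add_two_le_of_forall_vecMul_upperLeft_eq_zero le_rfl W hW.ge hw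
        fun M hM => hWw _ (Submodule.mem_map_of_mem hM)
  exact ⟨M, hM, hM0, by omega⟩
end

section
/- Every symmetric matrix of rank at most 2 over ℂ is of the form μ + μᵀ for some matrix μ of rank at most 1, i.e., the map μ ↦ μ + μᵀ from rank-≤1 n×n matrices surjects onto symmetric matrices of rank ≤ 2. -/
/-!
Choose `P : Matrix (Fin n) (Fin 2) ℂ` such that the columns of `S * P` span the column space of
`S`; then `S = S * P * A` for some `A`, and symmetry turns this into `S = Aᵀ * C * A` with
`C = Pᵀ * S * P` a symmetric `2 × 2` matrix. The binary quadratic form of `C` splits into two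
linear factors over `ℂ`, i.e. `C = p qᵀ + q pᵀ`, and hence `S = (Aᵀ p)(Aᵀ q)ᵀ + (Aᵀ q)(Aᵀ p)ᵀ`.
-/

open Matrix

open Module Set in
theorem Submodule.exists_fin_span_range_eq_of_finrank_le {K V : Type*} [DivisionRing K]
    [AddCommGroup V] [Module K V] (W : Submodule K V) [FiniteDimensional K W] {k : ℕ}
    (hk : finrank K W ≤ k) : ∃ u : Fin k → V, span K (range u) = W := by
  classical
  let b := Module.finBasis K W
  -- a basis of `W`, padded with zeros
  refine ⟨Function.extend (Fin.castLE hk) (fun i ↦ (b i : V)) 0, le_antisymm ?_ ?_⟩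
  · rw [span_le]
    rintro _ ⟨i, rfl⟩
    rw [Function.extend_def]
    split_ifs
    exacts [(b _).2, W.zero_mem]
  · calc W = (⊤ : Submodule K W).map W.subtype := W.map_subtype_top.symm
      _ = span K (range (W.subtype ∘ b)) := by rw [← b.span_eq, map_span, range_comp]
      _ ≤ _ := span_mono <| by
        rintro _ ⟨i, rfl⟩
        exact ⟨Fin.castLE hk i, (Fin.castLE_injective hk).extend_apply _ _ _⟩

namespace Matrix

theorem exists_eq_mul_mul_of_rank_le {K m : Type*} [Field K] [Fintype m]
    (S : Matrix m m K) {k : ℕ} (hk : S.rank ≤ k) :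
    ∃ (P : Matrix m (Fin k) K) (A : Matrix (Fin k) m K), S = S * P * A := by
  obtain ⟨u, hu⟩ := (LinearMap.range S.mulVecLin).exists_fin_span_range_eq_of_finrank_le hk
  choose p hp using fun i ↦
    (hu ▸ Submodule.subset_span ⟨i, rfl⟩ : u i ∈ LinearMap.range S.mulVecLin)
  have hcol : ∀ j, S.col j ∈ Submodule.span K (Set.range u) := fun j ↦
    hu ▸ S.range_mulVecLin ▸ Submodule.subset_span ⟨j, rfl⟩
  choose c hc using fun j ↦ (Submodule.mem_span_range_iff_exists_fun K).mp (hcol j)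
  refine ⟨of fun j i ↦ p i j, of fun i j ↦ c j i, ?_⟩
  have hSP : S * of (fun j i ↦ p i j) = of fun a i ↦ u i a := by
    ext a i
    simp [← hp, mul_apply, mulVec, dotProduct]
  ext a j
  have hcol_apply := congrFun (hc j) a
  simp only [Finset.sum_apply, Pi.smul_apply, smul_eq_mul, col_apply] at hcol_apply
  rw [hSP, ← hcol_apply, mul_apply]
  simp [mul_comm]

theorem IsSymm.transpose_mul_mul {R m k : Type*} [CommSemiring R] [Fintype m]
    {S : Matrix m m R} (hS : S.IsSymm) (P : Matrix m k R) : (Pᵀ * S * P).IsSymm := by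
  simp [IsSymm, transpose_mul, hS.eq, Matrix.mul_assoc]

theorem IsSymm.eq_transpose_mul_mul_of_eq_mul_mul {R m k : Type*} [CommSemiring R]
    [Fintype m] [Fintype k] {S : Matrix m m R} (hS : S.IsSymm) {P : Matrix m k R}
    {A : Matrix k m R} (h : S = S * P * A) : S = Aᵀ * (Pᵀ * S * P) * A := by
  have hT : S = Aᵀ * Pᵀ * S := by
    conv_lhs => rw [← hS.eq, h]
    simp only [transpose_mul, hS.eq, Matrix.mul_assoc]
  calc S = S * P * A := h
    _ = Aᵀ * Pᵀ * S * P * A := by rw [← hT]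
    _ = Aᵀ * (Pᵀ * S * P) * A := by simp only [Matrix.mul_assoc]

theorem IsSymm.exists_eq_vecMulVec_add_transpose_of_fin_two {K : Type*} [Field K]
    [IsAlgClosed K] [NeZero (2 : K)] {C : Matrix (Fin 2) (Fin 2) K} (hC : C.IsSymm) :
    ∃ p q : Fin 2 → K, C = vecMulVec p q + (vecMulVec p q)ᵀ := by
  have h10 : C 1 0 = C 0 1 := hC.apply 0 1
  by_cases h00 : C 0 0 = 0
  · refine ⟨![0, 1], ![C 0 1, C 1 1 / 2], ?_⟩
    ext i j
    fin_cases i <;> fin_cases j <;> simp [h00, h10]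
  · -- factor `C₀₀ X² + 2 C₀₁ XY + C₁₁ Y²` by the quadratic formula, `s` a root of the discriminant
    obtain ⟨s, hs⟩ := IsAlgClosed.exists_pow_nat_eq (C 0 1 ^ 2 - C 0 0 * C 1 1) two_pos
    refine ⟨![1, (C 0 1 + s) / C 0 0], ![C 0 0 / 2, (C 0 1 - s) / 2], ?_⟩
    ext i j
    fin_cases i <;> fin_cases j <;> simp [h10] <;> field_simp
    · ring
    · ring
    · linear_combination 2 * hs

theorem transpose_mul_vecMulVec_mul {R m n k : Type*} [CommSemiring R] [Fintype k]
    (A : Matrix k m R) (B : Matrix k n R) (p q : k → R) :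
    Aᵀ * vecMulVec p q * B = vecMulVec (p ᵥ* A) (q ᵥ* B) := by
  rw [mul_vecMulVec, vecMulVec_mul, mulVec_transpose]

end Matrix

/-- Every symmetric `n×n` matrix of rank at most 2 over `ℂ` is of the form `μ + μᵀ` for
some matrix `μ` of rank at most 1 (i.e. `μ = v·wᵀ`). -/
theorem symm_rank_le_two_eq_mu_add_mu_transpose {n : ℕ}
    (S : Matrix (Fin n) (Fin n) ℂ) (hsymm : S.IsSymm) (hrank : S.rank ≤ 2) :
    ∃ v w : Fin n → ℂ, S = Matrix.vecMulVec v w + (Matrix.vecMulVec v w)ᵀ := by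
  obtain ⟨P, A, hPA⟩ := S.exists_eq_mul_mul_of_rank_le hrank
  obtain ⟨p, q, hpq⟩ := (hsymm.transpose_mul_mul P).exists_eq_vecMulVec_add_transpose_of_fin_two
  refine ⟨p ᵥ* A, q ᵥ* A, ?_⟩
  rw [hsymm.eq_transpose_mul_mul_of_eq_mul_mul hPA, hpq, Matrix.mul_add, Matrix.add_mul,
    transpose_vecMulVec, transpose_mul_vecMulVec_mul, transpose_mul_vecMulVec_mul,
    transpose_vecMulVec]
end

section
/- Let Λ be an even lattice and β ∈ Λ primitive with divisibility div(β). Then disc(β^⊥) = ± β² · disc(Λ) / div(β)², where β^⊥ ⊂ Λ is the orthogonal complement. In the special case disc(Λ) = 4 and div(β) ∈ {1, 2}: disc(β^⊥) = −4β² if div(β) = 1 and disc(β^⊥) = −β² if div(β) = 2. -/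
/-! Choose `w` with `β·G·w = d`. Since `x - k • w ∈ β^⊥` whenever `β·G·x = k d`, the vectors
`w, b₁, …, b_{n-1}` form a basis of `ℤⁿ`, so their Gram matrix `M` has determinant `det G`.
Writing `β = c₀ w + ∑ cᵢ bᵢ`, the row vector `c M` is `(d, 0, …, 0)`; Cramer's rule
`c M adj M = det M • c` then gives `d D = det M c₀`, while `β·G·β = d c₀`. Multiplying by `d`
yields `D d² = β² det G`, so the sign is always `+1`. -/

open Matrix

namespace Matrix

variable {R : Type*} [CommRing R]

theorem mul_adjugate_apply_of_vecMul_eq_single {ι : Type*} [Fintype ι] [DecidableEq ι]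
    {M : Matrix ι ι R} {c : ι → R} {i : ι} {d : R} (h : c ᵥ* M = Pi.single i d) (j : ι) :
    d * adjugate M i j = M.det * c j := by
  have := congrFun (congrArg (· ᵥ* adjugate M) h) j
  simp only [vecMul_vecMul, mul_adjugate, vecMul_smul, vecMul_one, single_vecMul] at this
  simpa [mul_comm] using this.symm

theorem vecMul_mul_mul_transpose {κ ι : Type*} [Fintype κ] [Fintype ι]
    (E : Matrix κ ι R) (G : Matrix ι ι R) (c : κ → R) :
    c ᵥ* (E * G * Eᵀ) = fun j => (c ᵥ* E) ⬝ᵥ G *ᵥ E j := by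
  ext j
  rw [← vecMul_vecMul, vecMul_transpose, ← vecMul_vecMul, dotProduct_mulVec]
  exact dotProduct_comm _ _

theorem vecMul_mul_mul_transpose_dotProduct {κ ι : Type*} [Fintype κ] [Fintype ι]
    (E : Matrix κ ι R) (G : Matrix ι ι R) (c c' : κ → R) :
    c ᵥ* (E * G * Eᵀ) ⬝ᵥ c' = (c ᵥ* E) ⬝ᵥ G *ᵥ (c' ᵥ* E) := by
  rw [← vecMul_vecMul, dotProduct_vecMul_transpose, dotProduct_comm, ← vecMul_vecMul,
    ← dotProduct_mulVec]

end Matrix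

theorem Module.Basis.repr_vecMul_coe {R ι κ : Type*} [CommRing R] [Fintype ι]
    {p : Submodule R (κ → R)} (b : Module.Basis ι R p) (y : p) :
    b.repr y ᵥ* of (fun i => (b i : κ → R)) = y := by
  conv_rhs => rw [← b.sum_repr y]
  rw [vecMul_eq_sum, Submodule.coe_sum]
  rfl

section OrthogonalComplement

variable {R : Type*} [CommRing R] {m : ℕ} {G : Matrix (Fin (m + 1)) (Fin (m + 1)) R}
  {β w : Fin (m + 1) → R} {d : R} {perp : Submodule R (Fin (m + 1) → R)}

theorem vecMul_cons_basis_surjective (hdvd : ∀ x, d ∣ β ⬝ᵥ G *ᵥ x) (hw : β ⬝ᵥ G *ᵥ w = d)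
    (hperp : ∀ x, x ∈ perp ↔ β ⬝ᵥ G *ᵥ x = 0) (b : Module.Basis (Fin m) R perp) :
    Function.Surjective (of (vecCons w fun i => (b i : Fin (m + 1) → R))).vecMul := by
  intro x
  obtain ⟨k, hk⟩ := hdvd x
  have hmem : x - k • w ∈ perp := by
    rw [hperp, mulVec_sub, dotProduct_sub, mulVec_smul, dotProduct_smul, hw, hk, smul_eq_mul,
      mul_comm, sub_self]
  refine ⟨vecCons k (b.repr ⟨_, hmem⟩), ?_⟩
  change _ ᵥ* _ = x
  rw [cons_vecMul_cons, b.repr_vecMul_coe]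
  exact add_sub_cancel _ _

theorem exists_isUnit_det_gram_basis_mul_sq (hdvd : ∀ x, d ∣ β ⬝ᵥ G *ᵥ x)
    (hw : β ⬝ᵥ G *ᵥ w = d) (hperp : ∀ x, x ∈ perp ↔ β ⬝ᵥ G *ᵥ x = 0)
    (b : Module.Basis (Fin m) R perp) :
    ∃ u : R, IsUnit u ∧ (of fun i j => (b i : Fin (m + 1) → R) ⬝ᵥ G *ᵥ b j).det * d ^ 2 =
      u ^ 2 * (β ⬝ᵥ G *ᵥ β) * G.det := by
  set gram := of fun i j => (b i : Fin (m + 1) → R) ⬝ᵥ G *ᵥ b j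
  set E := of (vecCons w fun i => (b i : Fin (m + 1) → R))
  have hsurj := vecMul_cons_basis_surjective hdvd hw hperp b
  have hE : IsUnit E.det := (isUnit_iff_isUnit_det E).mp (vecMul_surjective_iff_isUnit.mp hsurj)
  obtain ⟨c, hc⟩ : ∃ c, c ᵥ* E = β := hsurj β
  set M := E * G * Eᵀ
  have hcM : c ᵥ* M = Pi.single 0 d := by
    rw [vecMul_mul_mul_transpose, hc]
    ext j
    refine Fin.cases ?_ (fun i => ?_) j
    · exact hw
    · exact (hperp _).mp (b i).2
  have hββ : β ⬝ᵥ G *ᵥ β = d * c 0 := by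
    rw [← hc, ← vecMul_mul_mul_transpose_dotProduct, hcM, single_dotProduct]
  have hsub : M.submatrix Fin.succ Fin.succ = gram := by
    ext i j
    simp only [M, submatrix_apply, mul_mul_apply, transpose_transpose]
    rfl
  have hadj := mul_adjugate_apply_of_vecMul_eq_single hcM 0
  rw [adjugate_fin_succ_eq_det_submatrix, Fin.succAbove_zero, hsub, Fin.val_zero, add_zero,
    pow_zero, one_mul] at hadj
  have hMdet : M.det = E.det ^ 2 * G.det := by
    rw [det_mul, det_mul, det_transpose]
    ring
  refine ⟨E.det, hE, ?_⟩
  calc gram.det * d ^ 2 = d * (d * gram.det) := by ring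
    _ = E.det ^ 2 * (β ⬝ᵥ G *ᵥ β) * G.det := by rw [hadj, hMdet, hββ]; ring

end OrthogonalComplement

theorem disc_orthogonal_complement_general {n : ℕ}
    (G : Matrix (Fin n) (Fin n) ℤ)
    (β : Fin n → ℤ)
    (d : ℕ)
    (hdiv : ∀ t : ℤ, (∃ x : Fin n → ℤ, β ⬝ᵥ G.mulVec x = t) ↔ (d : ℤ) ∣ t)
    (perp : Submodule ℤ (Fin n → ℤ))
    (hperp : ∀ x : Fin n → ℤ, x ∈ perp ↔ β ⬝ᵥ G.mulVec x = 0)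
    (b' : Module.Basis (Fin (n - 1)) ℤ perp)
    (D : ℤ)
    (hD : D = (Matrix.of fun i j : Fin (n - 1) =>
      ((b' i : Fin n → ℤ) ⬝ᵥ G.mulVec (b' j : Fin n → ℤ))).det) :
    (∃ ε : ℤ, (ε = 1 ∨ ε = -1) ∧ D * (d : ℤ) ^ 2 = ε * (β ⬝ᵥ G.mulVec β) * G.det) ∧
    (G.det = 4 →
      (d = 1 → D = -(4 * (β ⬝ᵥ G.mulVec β)) ∨ D = 4 * (β ⬝ᵥ G.mulVec β)) ∧
      (d = 2 → D = -(β ⬝ᵥ G.mulVec β) ∨ D = β ⬝ᵥ G.mulVec β)) := by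
  obtain ⟨w, hw⟩ := (hdiv d).mpr dvd_rfl
  have hdvd : ∀ x, (d : ℤ) ∣ β ⬝ᵥ G.mulVec x := fun x => (hdiv _).mp ⟨x, rfl⟩
  have key : D * (d : ℤ) ^ 2 = (β ⬝ᵥ G.mulVec β) * G.det := by
    cases n with
    | zero =>
      have hd0 : (d : ℤ) = 0 := by simpa using hw.symm
      simp [hd0]
    | succ m =>
      obtain ⟨u, hu, h⟩ := exists_isUnit_det_gram_basis_mul_sq hdvd hw hperp b'
      rw [hD]
      simpa [Int.isUnit_sq hu] using h
  refine ⟨⟨1, .inl rfl, by rw [key, one_mul]⟩, fun h4 => ⟨fun hd1 => .inr ?_, fun hd2 => .inr ?_⟩⟩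
  · rw [hd1, h4] at key
    push_cast at key
    linarith
  · rw [hd2, h4] at key
    push_cast at key
    linarith

/-- Let `Λ` be an even nondegenerate lattice with Gram matrix `G`, `β ∈ Λ` primitive
with divisibility `d`, and let `D` be the discriminant (Gram determinant) of the
orthogonal complement `β^⊥ ⊂ Λ`.  Then `D = ± β² · disc(Λ) / d²`, i.e.
`D·d² = ± β²·det G`.  In the special case `det G = 4` and `d ∈ {1, 2}`:
`D = −4β²` (up to the sign ambiguity) if `d = 1` and `D = −β²` if `d = 2`. -/
theorem disc_orthogonal_complement {n : ℕ}
    (G : Matrix (Fin n) (Fin n) ℤ) (hGsymm : G.IsSymm)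
    (heven : ∀ v : Fin n → ℤ, 2 ∣ v ⬝ᵥ G.mulVec v)
    (hGdet : G.det ≠ 0)
    (β : Fin n → ℤ)
    (hβprim : ∀ (c : ℤ) (u : Fin n → ℤ), β = c • u → IsUnit c)
    (d : ℕ) (hd : 0 < d)
    (hdiv : ∀ t : ℤ, (∃ x : Fin n → ℤ, β ⬝ᵥ G.mulVec x = t) ↔ (d : ℤ) ∣ t)
    (perp : Submodule ℤ (Fin n → ℤ))
    (hperp : ∀ x : Fin n → ℤ, x ∈ perp ↔ β ⬝ᵥ G.mulVec x = 0)
    (b' : Module.Basis (Fin (n - 1)) ℤ perp)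
    (D : ℤ)
    (hD : D = (Matrix.of fun i j : Fin (n - 1) =>
      ((b' i : Fin n → ℤ) ⬝ᵥ G.mulVec (b' j : Fin n → ℤ))).det) :
    (∃ ε : ℤ, (ε = 1 ∨ ε = -1) ∧ D * (d : ℤ) ^ 2 = ε * (β ⬝ᵥ G.mulVec β) * G.det) ∧
    (G.det = 4 →
      (d = 1 → D = -(4 * (β ⬝ᵥ G.mulVec β)) ∨ D = 4 * (β ⬝ᵥ G.mulVec β)) ∧
      (d = 2 → D = -(β ⬝ᵥ G.mulVec β) ∨ D = β ⬝ᵥ G.mulVec β)) :=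
  disc_orthogonal_complement_general G β d hdiv perp hperp b' D hD
end
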